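/- Let T > 0 and 0 < ε ≤ δ/2 be real numbers, let m be a natural number, and set P(m) = T^{m+1}·(1/(T+δ−ε)^{m+1} − 1/(T+δ+ε)^{m+1}). Then for every natural number d ≥ 1, Q_{P(m)}(m, d) ≤ m / (1 + (δ−ε)/T)^{m+1}. -/

import Mathlib

/-- The binomial upper-tail probability `Q_p(m,d) = Σ_{l=d}^{m-1} C(m-1,l) p^l (1-p)^{m-1-l}`. -/
noncomputable def Qtail (p : ℝ) (m d : ℕ) : ℝ :=
  ∑ l ∈ Finset.Ico d m, (Nat.choose (m - 1) l : ℝ) * p ^ l * (1 - p) ^ (m - 1 - l)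

/-!
Shrinking the tail to `d = 1` and using the binomial theorem gives
`Q_p(m, d) ≤ 1 - (1 - p)^(m-1) ≤ m p` (Bernoulli's inequality), and
`0 ≤ P(m) ≤ (T / (T + δ - ε))^(m+1) ≤ 1`, which is exactly the right-hand side divided by `m`.
-/

theorem Qtail_le_Qtail_of_le {p : ℝ} (hp₀ : 0 ≤ p) (hp₁ : p ≤ 1) (m : ℕ) {d e : ℕ}
    (hde : d ≤ e) : Qtail p m e ≤ Qtail p m d := by
  have hq : 0 ≤ 1 - p := sub_nonneg.mpr hp₁
  exact Finset.sum_le_sum_of_subset_of_nonneg (Finset.Ico_subset_Ico_left hde)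
    fun _ _ _ => by positivity

theorem Qtail_one (p : ℝ) (m : ℕ) : Qtail p m 1 = 1 - (1 - p) ^ (m - 1) := by
  cases m with
  | zero => simp [Qtail]
  | succ n =>
    have hbinom := add_pow p (1 - p) n
    rw [add_sub_cancel, one_pow, Finset.sum_range_succ'] at hbinom
    rw [Qtail, Finset.sum_Ico_eq_sum_range, eq_sub_iff_add_eq]
    refine Eq.trans ?_ hbinom.symm
    simp only [add_tsub_cancel_right, add_comm 1, pow_zero, tsub_zero, one_mul,
      Nat.choose_zero_right, Nat.cast_one, mul_one, add_left_inj]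
    exact Finset.sum_congr rfl fun _ _ => by ring

theorem Qtail_le_mul {p : ℝ} (hp₀ : 0 ≤ p) (hp₁ : p ≤ 1) (m : ℕ) {d : ℕ} (hd : 1 ≤ d) :
    Qtail p m d ≤ m * p :=
  calc Qtail p m d ≤ Qtail p m 1 := Qtail_le_Qtail_of_le hp₀ hp₁ m hd
    _ = 1 - (1 - p) ^ (m - 1) := Qtail_one p m
    _ ≤ (m - 1 : ℕ) * p := by
      have hbernoulli := one_add_mul_le_pow (a := -p) (by linarith) (m - 1)
      rw [← sub_eq_add_neg] at hbernoulli
      linarith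
    _ ≤ m * p := by gcongr; omega

/-- For `T > 0`, `0 < ε ≤ δ/2` and `P(m) = T^{m+1}(1/(T+δ-ε)^{m+1} - 1/(T+δ+ε)^{m+1})`,
one has `Q_{P(m)}(m,d) ≤ m / (1 + (δ-ε)/T)^{m+1}` for all `d ≥ 1`. -/
theorem Qtail_le_geom (T ε δ : ℝ) (hT : 0 < T) (hε : 0 < ε) (hεδ : ε ≤ δ / 2) (m : ℕ)
    (P : ℝ) (hP : P = T ^ (m + 1) * (1 / (T + δ - ε) ^ (m + 1) - 1 / (T + δ + ε) ^ (m + 1)))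
    (d : ℕ) (hd : 1 ≤ d) :
    Qtail P m d ≤ m / (1 + (δ - ε) / T) ^ (m + 1) := by
  have hTa : T ≤ T + δ - ε := by linarith
  have hab : T + δ - ε ≤ T + δ + ε := by linarith
  have ha : 0 < T + δ - ε := hT.trans_le hTa
  have hb : 0 < T + δ + ε := ha.trans_le hab
  have hP₀ : 0 ≤ P := by
    rw [hP]
    exact mul_nonneg (by positivity) (sub_nonneg.mpr (by gcongr))
  have hPq : P ≤ (T / (T + δ - ε)) ^ (m + 1) := by
    rw [hP, div_pow, div_eq_mul_one_div (T ^ (m + 1))]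
    exact mul_le_mul_of_nonneg_left (sub_le_self _ (by positivity)) (by positivity)
  have hq₁ : (T / (T + δ - ε)) ^ (m + 1) ≤ 1 :=
    pow_le_one₀ (by positivity) ((div_le_one ha).mpr hTa)
  calc Qtail P m d ≤ m * P := Qtail_le_mul hP₀ (hPq.trans hq₁) m hd
    _ ≤ m * (T / (T + δ - ε)) ^ (m + 1) := by gcongr
    _ = m / (1 + (δ - ε) / T) ^ (m + 1) := by
      rw [one_add_div hT.ne', div_pow, div_pow, add_sub_assoc]
      field_simp
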